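/- Let p = Σ_{i=0}^{7} e_i ⊗ p_i ∈ 𝕆 ⊗ Cl₈ with p_i ∈ Cl₈. Then for every i ∈ {0,…,7}: (1/8)·(e_i ⊗ 1)·(Σ_{j=0}^{7} (−1)^{σ(j,i)}·(J_j ⊗ id)(p)) = 1 ⊗ p_i. -/

import Mathlib

noncomputable section

open scoped Quaternion TensorProduct

/-- The octonions, realized as the Cayley–Dickson double of the quaternions. -/
def Oct : Type := ℍ × ℍ

namespace Oct

instance : AddCommGroup Oct := inferInstanceAs (AddCommGroup (ℍ × ℍ))
instance : Module ℝ Oct := inferInstanceAs (Module ℝ (ℍ × ℍ))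

/-- First (quaternionic) component. -/
def x (p : Oct) : ℍ := Prod.fst p
/-- Second (quaternionic) component. -/
def y (p : Oct) : ℍ := Prod.snd p
/-- Build an octonion from two quaternions. -/
def mk (a b : ℍ) : Oct := ((a, b) : ℍ × ℍ)

@[simp] lemma x_mk (a b : ℍ) : (mk a b).x = a := rfl
@[simp] lemma y_mk (a b : ℍ) : (mk a b).y = b := rfl
@[simp] lemma x_add (p q : Oct) : (p + q).x = p.x + q.x := rfl
@[simp] lemma y_add (p q : Oct) : (p + q).y = p.y + q.y := rfl
@[simp] lemma x_smul (r : ℝ) (p : Oct) : (r • p).x = r • p.x := rfl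
@[simp] lemma y_smul (r : ℝ) (p : Oct) : (r • p).y = r • p.y := rfl
@[simp] lemma x_zero : (0 : Oct).x = 0 := rfl
@[simp] lemma y_zero : (0 : Oct).y = 0 := rfl

@[ext] lemma ext {p q : Oct} (h1 : p.x = q.x) (h2 : p.y = q.y) : p = q :=
  Prod.ext h1 h2

/-- Cayley–Dickson multiplication: `(a,b)·(c,d) = (a·c − conj(d)·b, d·a + b·conj(c))`. -/
instance : Mul Oct :=
  ⟨fun p q => mk (p.x * q.x - star q.y * p.y) (q.y * p.x + p.y * star q.x)⟩

instance : One Oct := ⟨mk 1 0⟩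

@[simp] lemma x_mul (p q : Oct) : (p * q).x = p.x * q.x - star q.y * p.y := rfl
@[simp] lemma y_mul (p q : Oct) : (p * q).y = q.y * p.x + p.y * star q.x := rfl
@[simp] lemma x_one : (1 : Oct).x = 1 := rfl
@[simp] lemma y_one : (1 : Oct).y = 0 := rfl

instance : NonUnitalNonAssocRing Oct :=
  { (inferInstance : AddCommGroup Oct) with
    mul := (· * ·)
    left_distrib := by
      intro p q r
      refine ext ?_ ?_ <;>
        simp only [x_mul, y_mul, x_add, y_add, star_add] <;> noncomm_ring
    right_distrib := by
      intro p q r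
      refine ext ?_ ?_ <;>
        simp only [x_mul, y_mul, x_add, y_add, star_add] <;> noncomm_ring
    zero_mul := by
      intro p
      refine ext ?_ ?_ <;> simp only [x_mul, y_mul, x_zero, y_zero, star_zero] <;> simp
    mul_zero := by
      intro p
      refine ext ?_ ?_ <;> simp only [x_mul, y_mul, x_zero, y_zero, star_zero] <;> simp }

instance : SMulCommClass ℝ Oct Oct where
  smul_comm r p q := by
    show r • (p * q) = p * (r • q)
    refine ext ?_ ?_ <;>
      simp [x_mul, y_mul, smul_sub, smul_add, mul_smul_comm, smul_mul_assoc,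
        star_smul, star_trivial]

instance : IsScalarTower ℝ Oct Oct where
  smul_assoc r p q := by
    show (r • p) * q = r • (p * q)
    refine ext ?_ ?_ <;>
      simp [x_mul, y_mul, smul_sub, smul_add, mul_smul_comm, smul_mul_assoc,
        star_smul, star_trivial]

/-- Octonionic conjugation: `conj (a,b) = (conj a, −b)`. -/
def conj (p : Oct) : Oct := mk (star p.x) (-p.y)

/-- The real part of an octonion. -/
def re (p : Oct) : ℝ := p.x.re

/-- The standard basis `e_0, …, e_7` of the octonions. -/
def e : Fin 8 → Oct :=
  ![mk 1 0, mk ⟨0, 1, 0, 0⟩ 0, mk ⟨0, 0, 1, 0⟩ 0, mk ⟨0, 0, 0, 1⟩ 0,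
    mk 0 1, mk 0 ⟨0, 1, 0, 0⟩, mk 0 ⟨0, 0, 1, 0⟩, mk 0 ⟨0, 0, 0, 1⟩]

/-- The real coordinates of an octonion with respect to the standard basis. -/
def coord : Fin 8 → Oct → ℝ :=
  ![fun p => p.x.re, fun p => p.x.imI, fun p => p.x.imJ, fun p => p.x.imK,
    fun p => p.y.re, fun p => p.y.imI, fun p => p.y.imJ, fun p => p.y.imK]

lemma coord_add (j : Fin 8) (p q : Oct) :
    coord j (p + q) = coord j p + coord j q := by fin_cases j <;> rfl

lemma coord_smul (j : Fin 8) (r : ℝ) (p : Oct) :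
    coord j (r • p) = r * coord j p := by fin_cases j <;> rfl

/-- The binary "dot product" `⟨i,j⟩ = i₁j₁ + i₂j₂ + i₃j₃` of binary digits. -/
def bdot (i j : Fin 8) : ℕ :=
  ((i.val.testBit 0 && j.val.testBit 0).toNat +
   (i.val.testBit 1 && j.val.testBit 1).toNat +
   (i.val.testBit 2 && j.val.testBit 2).toNat) % 2

/-- The involution `J_i`, the ℝ-linear map determined by `J_i(e_j) = (−1)^{⟨i,j⟩} e_j`. -/
def J (i : Fin 8) : Oct →ₗ[ℝ] Oct where
  toFun p := ∑ j : Fin 8, ((-1 : ℝ) ^ bdot i j * coord j p) • e j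
  map_add' p q := by
    simp only [coord_add, mul_add, add_smul]
    rw [Finset.sum_add_distrib]
  map_smul' r p := by
    simp only [coord_smul, RingHom.id_apply, Finset.smul_sum, smul_smul, mul_left_comm]

/-- The sign `σ(j,i)` defined by `J_j(conj e_i) = (−1)^{σ(j,i)} e_i`. -/
def sigma (j i : Fin 8) : ℕ := if i = 0 then 0 else (bdot j i + 1) % 2

end Oct
namespace Oct

@[simp] lemma e_0 : e 0 = mk 1 0 := rfl
@[simp] lemma e_1 : e 1 = mk ⟨0, 1, 0, 0⟩ 0 := rfl
@[simp] lemma e_2 : e 2 = mk ⟨0, 0, 1, 0⟩ 0 := rfl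
@[simp] lemma e_3 : e 3 = mk ⟨0, 0, 0, 1⟩ 0 := rfl
@[simp] lemma e_4 : e 4 = mk 0 1 := rfl
@[simp] lemma e_5 : e 5 = mk 0 ⟨0, 1, 0, 0⟩ := rfl
@[simp] lemma e_6 : e 6 = mk 0 ⟨0, 0, 1, 0⟩ := rfl
@[simp] lemma e_7 : e 7 = mk 0 ⟨0, 0, 0, 1⟩ := rfl

@[simp] lemma coord_0 (p : Oct) : coord 0 p = p.x.re := rfl
@[simp] lemma coord_1 (p : Oct) : coord 1 p = p.x.imI := rfl
@[simp] lemma coord_2 (p : Oct) : coord 2 p = p.x.imJ := rfl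
@[simp] lemma coord_3 (p : Oct) : coord 3 p = p.x.imK := rfl
@[simp] lemma coord_4 (p : Oct) : coord 4 p = p.y.re := rfl
@[simp] lemma coord_5 (p : Oct) : coord 5 p = p.y.imI := rfl
@[simp] lemma coord_6 (p : Oct) : coord 6 p = p.y.imJ := rfl
@[simp] lemma coord_7 (p : Oct) : coord 7 p = p.y.imK := rfl

lemma coord_e (l m : Fin 8) : coord l (e m) = if l = m then 1 else 0 := by
  fin_cases l <;> fin_cases m <;> rfl

lemma sum_coord_smul_e (p : Oct) : ∑ l : Fin 8, coord l p • e l = p := by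
  refine ext ?_ ?_ <;>
    · simp only [Fin.sum_univ_eight, e_0, e_1, e_2, e_3, e_4, e_5, e_6, e_7,
        coord_0, coord_1, coord_2, coord_3, coord_4, coord_5, coord_6, coord_7,
        x_add, y_add, x_smul, y_smul, x_mk, y_mk]
      ext <;> simp [mk, x, y] <;> (repeat' erw [QuaternionAlgebra.smul_mk]) <;> simp

end Oct

/-- The ℝ-linear isomorphism `Φ : ℝ⁸ → 𝕆` with `Φ(b_l) = e_l`. -/
def Phi : EuclideanSpace ℝ (Fin 8) ≃ₗ[ℝ] Oct where
  toFun v := ∑ l : Fin 8, v l • Oct.e l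
  map_add' u v := by
    simp only [PiLp.add_apply, add_smul]
    rw [Finset.sum_add_distrib]
  map_smul' r v := by
    simp only [PiLp.smul_apply, smul_eq_mul, RingHom.id_apply, Finset.smul_sum, smul_smul]
  invFun p := (WithLp.toLp 2 (fun l => Oct.coord l p) : EuclideanSpace ℝ (Fin 8))
  left_inv v := by
    ext l
    fin_cases l <;>
      simp [Fin.sum_univ_eight, Oct.coord_add, Oct.coord_smul, Oct.coord_e] <;>
        (repeat' erw [Oct.x_mk]) <;> (repeat' erw [Oct.y_mk]) <;> simp
  right_inv p := Oct.sum_coord_smul_e p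

/-- The quadratic form `Q(v) = −‖v‖²` on ℝ⁸. -/
def Q8 : QuadraticForm ℝ (EuclideanSpace ℝ (Fin 8)) :=
  - LinearMap.BilinMap.toQuadraticMap
      (innerₗ (EuclideanSpace ℝ (Fin 8)) : LinearMap.BilinForm ℝ (EuclideanSpace ℝ (Fin 8)))

/-- The Clifford algebra `Cl₈` of `Q(v) = −‖v‖²` on ℝ⁸. -/
abbrev Cl8 := CliffordAlgebra Q8

/-- The Clifford generators `g_l := ι(b_l)`. -/
def g (l : Fin 8) : Cl8 := CliffordAlgebra.ι Q8 (EuclideanSpace.single l 1)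

/-- The extension `J_j ⊗ id` of `J_j` to `𝕆 ⊗ Cl₈`. -/
def JT (j : Fin 8) : Oct ⊗[ℝ] Cl8 →ₗ[ℝ] Oct ⊗[ℝ] Cl8 :=
  TensorProduct.map (Oct.J j) LinearMap.id

/-- The element `Ω := Σᵢ conj(eᵢ) ⊗ gᵢ` of `𝕆 ⊗ Cl₈`. -/
def Omega : Oct ⊗[ℝ] Cl8 := ∑ i : Fin 8, (Oct.e i).conj ⊗ₜ[ℝ] g i

/-- The octonionic Witt basis `f_j := (J_j ⊗ id)(Ω)`. -/
def f (j : Fin 8) : Oct ⊗[ℝ] Cl8 := JT j Omega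

/-- The twistor vectors `X_i := Φ⁻¹(Φ(X)·conj(e_i))`. -/
def Xtw (X : EuclideanSpace ℝ (Fin 8)) (i : Fin 8) : EuclideanSpace ℝ (Fin 8) :=
  Phi.symm (Phi X * (Oct.e i).conj)

/-- The Hermitian variables `Z_j := (J_j ⊗ id)(Ω·(Φ(X) ⊗ 1))`. -/
def Z (X : EuclideanSpace ℝ (Fin 8)) (j : Fin 8) : Oct ⊗[ℝ] Cl8 :=
  JT j (Omega * (Phi X ⊗ₜ[ℝ] (1 : Cl8)))

/-! Each `J_j` acts diagonally on the basis, `e_k ↦ (-1)^⟨j,k⟩ e_k`, and the characters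
`j ↦ (-1)^⟨j,k⟩` of `(ℤ/2)³` are orthogonal, so `∑ⱼ (-1)^⟨j,i⟩ (J_j ⊗ id)` is `8` times the
projection onto `e_i ⊗ Cl₈`. The sign `(-1)^σ(j,i)` differs from `(-1)^⟨j,i⟩` by the factor
`e_i² = ±1`, which the left multiplication by `e_i ⊗ 1` cancels. -/

namespace Oct

theorem e_mul_self (i : Fin 8) : e i * e i = (if i = 0 then (1 : ℝ) else -1) • (1 : Oct) := by
  -- the quaternion literals in `e` are typed `ℍ[ℝ,-1,-1]`, so `Quaternion` lemmas need `erw`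
  fin_cases i <;> refine ext ?_ ?_ <;>
    simp only [e, x_mul, y_mul, x_smul, y_smul, x_one, y_one] <;> ext <;> simp [mk, x, y] <;>
    first
    | erw [Quaternion.re_mul] | erw [Quaternion.imI_mul] | erw [Quaternion.imJ_mul]
    | erw [Quaternion.imK_mul]
  all_goals simp
  all_goals first
    | erw [Quaternion.re_star] | erw [Quaternion.imI_star] | erw [Quaternion.imJ_star]
    | erw [Quaternion.imK_star]
  all_goals simp

theorem J_e (j k : Fin 8) : J j (e k) = (-1 : ℝ) ^ bdot j k • e k := by
  simp [J, coord_e]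

theorem neg_one_pow_sigma (j i : Fin 8) :
    (-1 : ℝ) ^ sigma j i = (if i = 0 then 1 else -1) * (-1) ^ bdot j i := by
  have h : ∀ j i : Fin 8, (-1 : ℤ) ^ sigma j i = (if i = 0 then 1 else -1) * (-1) ^ bdot j i := by
    decide
  exact_mod_cast h j i

theorem sum_neg_one_pow_bdot_mul (i k : Fin 8) :
    ∑ j : Fin 8, (-1 : ℝ) ^ bdot j i * (-1) ^ bdot j k = if i = k then 8 else 0 := by
  have h : ∀ i k : Fin 8,
      ∑ j : Fin 8, (-1 : ℤ) ^ bdot j i * (-1) ^ bdot j k = if i = k then 8 else 0 := by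
    decide
  exact_mod_cast h i k

end Oct

theorem JT_e_tmul (j k : Fin 8) (c : Cl8) :
    JT j (Oct.e k ⊗ₜ[ℝ] c) = (-1 : ℝ) ^ Oct.bdot j k • (Oct.e k ⊗ₜ[ℝ] c) := by
  rw [JT, TensorProduct.map_tmul, Oct.J_e, LinearMap.id_apply, TensorProduct.smul_tmul']

theorem sum_neg_one_pow_bdot_smul_JT (pc : Fin 8 → Cl8) (i : Fin 8) :
    ∑ j : Fin 8, (-1 : ℝ) ^ Oct.bdot j i • JT j (∑ k : Fin 8, Oct.e k ⊗ₜ[ℝ] pc k)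
      = (8 : ℝ) • (Oct.e i ⊗ₜ[ℝ] pc i) := by
  calc ∑ j : Fin 8, (-1 : ℝ) ^ Oct.bdot j i • JT j (∑ k : Fin 8, Oct.e k ⊗ₜ[ℝ] pc k)
      = ∑ k : Fin 8, (∑ j : Fin 8, (-1 : ℝ) ^ Oct.bdot j i * (-1) ^ Oct.bdot j k)
          • (Oct.e k ⊗ₜ[ℝ] pc k) := by
        simp only [map_sum, JT_e_tmul, Finset.smul_sum, smul_smul, Finset.sum_smul]
        exact Finset.sum_comm
    _ = (8 : ℝ) • (Oct.e i ⊗ₜ[ℝ] pc i) := by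
        simp only [Oct.sum_neg_one_pow_bdot_mul, ite_smul, zero_smul, Finset.sum_ite_eq,
          Finset.mem_univ, if_true]

/-- If `p = Σᵢ eᵢ ⊗ pᵢ` in `𝕆 ⊗ Cl₈` with `pᵢ ∈ Cl₈`, then
`(1/8)·(eᵢ ⊗ 1)·(Σⱼ (−1)^{σ(j,i)}·(Jⱼ ⊗ id)(p)) = 1 ⊗ pᵢ`. -/
theorem tensor_coeff_projection (p : Oct ⊗[ℝ] Cl8) (pc : Fin 8 → Cl8)
    (hp : p = ∑ i : Fin 8, Oct.e i ⊗ₜ[ℝ] pc i) (i : Fin 8) :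
    (8 : ℝ)⁻¹ • ((Oct.e i ⊗ₜ[ℝ] (1 : Cl8)) *
        ∑ j : Fin 8, ((-1 : ℝ) ^ Oct.sigma j i) • JT j p)
      = (1 : Oct) ⊗ₜ[ℝ] pc i := by
  subst hp
  have hsum : ∑ j : Fin 8, (-1 : ℝ) ^ Oct.sigma j i • JT j (∑ k : Fin 8, Oct.e k ⊗ₜ[ℝ] pc k)
      = ((if i = 0 then 1 else -1) * 8 : ℝ) • (Oct.e i ⊗ₜ[ℝ] pc i) := by
    simp_rw [Oct.neg_one_pow_sigma, mul_smul, ← Finset.smul_sum, sum_neg_one_pow_bdot_smul_JT]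
  rw [hsum, mul_smul_comm, Algebra.TensorProduct.tmul_mul_tmul, one_mul, Oct.e_mul_self,
    ← TensorProduct.smul_tmul', smul_smul, smul_smul]
  split_ifs <;> norm_num
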